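/- arXiv:2405.16502 — 4 statements merged into one kernel-verified Lean document; each statement's English description precedes it below -/
import Mathlib

section
/- Let X and Z be independent nonnegative real random variables, where X is exponentially distributed with mean Ω_X > 0 (P(X > x) = exp(−x/Ω_X) for x ≥ 0) and Z is exponentially distributed with mean Ω_Z > 0. Then for all constants α ≥ 0 and β ≥ 0, P(X·Z ≥ α + β·Z) = (exp(−β/Ω_X)/Ω_Z) · ∫_0^∞ exp(−α/(Ω_X·z) − z/Ω_Z) dz. -/
open MeasureTheory ProbabilityTheory Set Filter Topology

/-- Strict-inequality survival, ENNReal form. -/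
lemma exp_surv_lt {Ω : Type*} [MeasureSpace Ω] [IsProbabilityMeasure (ℙ : Measure Ω)]
    (X : Ω → ℝ) (ΩX : ℝ)
    (hXexp : ∀ x : ℝ, 0 ≤ x → (ℙ {ω | x < X ω}).toReal = Real.exp (-x / ΩX))
    {s : ℝ} (hs : 0 ≤ s) : ℙ {ω | s < X ω} = ENNReal.ofReal (Real.exp (-s / ΩX)) := by
  rw [← hXexp s hs, ENNReal.ofReal_toReal (measure_ne_top _ _)]

/-- Non-strict-inequality survival. -/
lemma exp_surv_le {Ω : Type*} [MeasureSpace Ω] [IsProbabilityMeasure (ℙ : Measure Ω)]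
    (X : Ω → ℝ) (hXm : Measurable X) (hX0 : ∀ ω, 0 ≤ X ω) (ΩX : ℝ)
    (hXexp : ∀ x : ℝ, 0 ≤ x → (ℙ {ω | x < X ω}).toReal = Real.exp (-x / ΩX))
    {t : ℝ} (ht : 0 ≤ t) : ℙ {ω | t ≤ X ω} = ENNReal.ofReal (Real.exp (-t / ΩX)) := by
  rcases eq_or_lt_of_le ht with h0 | h0
  · have huniv : {ω | t ≤ X ω} = univ := by
      ext ω; simp only [mem_setOf_eq, mem_univ, iff_true]; rw [← h0]; exact hX0 ω
    rw [huniv, measure_univ, ← h0]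
    simp
  · set s : ℕ → ℝ := fun n => t - t / (n + 1) with hsdef
    have hs_nonneg : ∀ n : ℕ, 0 ≤ s n := fun n => by
      have : t / ((n : ℝ) + 1) ≤ t :=
        div_le_self h0.le (by exact_mod_cast le_add_of_nonneg_left (Nat.cast_nonneg n))
      simpa [hsdef] using this
    have hs_lt : ∀ n : ℕ, s n < t := fun n => by
      have : 0 < t / ((n : ℝ) + 1) := div_pos h0 (by positivity)
      simp [hsdef]; linarith
    set A : ℕ → Set Ω := fun n => {ω | s n < X ω} with hAdef
    have hInter : {ω | t ≤ X ω} = ⋂ n, A n := by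
      ext ω
      simp only [mem_setOf_eq, mem_iInter, hAdef]
      constructor
      · intro h n; exact lt_of_lt_of_le (hs_lt n) h
      · intro h
        by_contra hc
        push_neg at hc
        obtain ⟨n, hn⟩ := exists_nat_gt (t / (t - X ω))
        have hpos : 0 < t - X ω := by linarith
        have h1 : t / (t - X ω) < (n : ℝ) + 1 := by linarith
        have h2 : t / ((n : ℝ) + 1) < t - X ω := by
          rw [div_lt_iff₀ (by positivity)]
          calc t = (t / (t - X ω)) * (t - X ω) := by field_simp
            _ < ((n : ℝ) + 1) * (t - X ω) := mul_lt_mul_of_pos_right h1 hpos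
            _ = (t - X ω) * ((n : ℝ) + 1) := by ring
        have := h n
        simp only [hsdef] at this
        linarith
    have hanti : Antitone A := by
      intro n m hnm
      have hsm : s n ≤ s m := by
        have : t / ((m : ℝ) + 1) ≤ t / ((n : ℝ) + 1) := by
          apply div_le_div_of_nonneg_left h0.le (by positivity)
          exact_mod_cast by omega
        simp only [hsdef]; linarith
      intro ω hω
      exact lt_of_le_of_lt hsm hω
    have htend : Tendsto (fun n => ℙ (A n)) atTop (𝓝 (ℙ (⋂ n, A n))) :=
      tendsto_measure_iInter_atTop
        (fun n => (measurableSet_lt measurable_const hXm).nullMeasurableSet)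
        hanti ⟨0, measure_ne_top _ _⟩
    have hval : ∀ n, ℙ (A n) = ENNReal.ofReal (Real.exp (-(s n) / ΩX)) := fun n =>
      exp_surv_lt X ΩX hXexp (hs_nonneg n)
    have hst : Tendsto s atTop (𝓝 t) := by
      have h1 : Tendsto (fun n : ℕ => t * (1 / ((n : ℝ) + 1))) atTop (𝓝 (t * 0)) :=
        tendsto_const_nhds.mul tendsto_one_div_add_atTop_nhds_zero_nat
      have h2 : Tendsto (fun n : ℕ => t - t * (1 / ((n : ℝ) + 1))) atTop (𝓝 (t - t * 0)) :=
        tendsto_const_nhds.sub h1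
      simpa [hsdef, mul_one_div, div_eq_mul_inv] using h2
    have hcont : Continuous (fun x : ℝ => ENNReal.ofReal (Real.exp (-x / ΩX))) := by
      apply ENNReal.continuous_ofReal.comp
      exact Real.continuous_exp.comp (by continuity)
    have hlim : Tendsto (fun n => ENNReal.ofReal (Real.exp (-(s n) / ΩX))) atTop
        (𝓝 (ENNReal.ofReal (Real.exp (-t / ΩX)))) := (hcont.tendsto t).comp hst
    rw [hInter]
    refine tendsto_nhds_unique ?_ hlim
    convert htend using 2 with n
    exact (hval n).symm

/-- The law of an exponential r.v. (given via its survival function) is `expMeasure`. -/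
lemma exp_law {Ω : Type*} [MeasureSpace Ω] [IsProbabilityMeasure (ℙ : Measure Ω)]
    (Z : Ω → ℝ) (hZm : Measurable Z) (hZ0 : ∀ ω, 0 ≤ Z ω) (ΩZ : ℝ) (hΩZ : 0 < ΩZ)
    (hZexp : ∀ z : ℝ, 0 ≤ z → (ℙ {ω | z < Z ω}).toReal = Real.exp (-z / ΩZ)) :
    Measure.map Z ℙ = ProbabilityTheory.expMeasure (1 / ΩZ) := by
  have hr : 0 < 1 / ΩZ := by positivity
  have hprob : IsProbabilityMeasure (Measure.map Z ℙ) :=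
    Measure.isProbabilityMeasure_map hZm.aemeasurable
  have hprob2 : IsProbabilityMeasure (ProbabilityTheory.expMeasure (1 / ΩZ)) :=
    ProbabilityTheory.isProbabilityMeasure_expMeasure hr
  refine MeasureTheory.Measure.ext_of_Iic _ _ (fun a => ?_)
  have hRHS : ProbabilityTheory.expMeasure (1 / ΩZ) (Iic a)
      = ENNReal.ofReal (if 0 ≤ a then 1 - Real.exp (-(1 / ΩZ * a)) else 0) := by
    rw [show ProbabilityTheory.expMeasure (1 / ΩZ)
        = volume.withDensity (ProbabilityTheory.exponentialPDF (1 / ΩZ)) from rfl,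
      withDensity_apply _ measurableSet_Iic,
      ProbabilityTheory.lintegral_exponentialPDF_eq_antiDeriv hr a]
  rw [hRHS, Measure.map_apply hZm measurableSet_Iic]
  by_cases ha : 0 ≤ a
  · rw [if_pos ha]
    have hset : Z ⁻¹' Iic a = {ω | a < Z ω}ᶜ := by
      ext ω; simp [not_lt]
    rw [hset, measure_compl (measurableSet_lt measurable_const hZm) (measure_ne_top _ _),
      measure_univ, exp_surv_lt Z ΩZ hZexp ha,
      ENNReal.ofReal_sub _ (Real.exp_pos _).le, ENNReal.ofReal_one]
    congr 2
    field_simp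
  · rw [if_neg ha]
    have hset : Z ⁻¹' Iic a = ∅ := by
      ext ω
      simp only [mem_preimage, mem_Iic, mem_empty_iff_false, iff_false, not_le]
      exact lt_of_lt_of_le (not_le.mp ha) (hZ0 ω)
    simp [hset]

/-- If `X` and `Z` are independent exponentials with means `Ω_X` and `Ω_Z`, then for
`α, β ≥ 0`, `P(X·Z ≥ α + β·Z) = (exp(-β/Ω_X)/Ω_Z)·∫_0^∞ exp(-α/(Ω_X z) - z/Ω_Z) dz`. -/
theorem exp_product_survival
    {Ω : Type*} [MeasureSpace Ω] [IsProbabilityMeasure (ℙ : Measure Ω)]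
    (X Z : Ω → ℝ) (hXm : Measurable X) (hZm : Measurable Z)
    (hX0 : ∀ ω, 0 ≤ X ω) (hZ0 : ∀ ω, 0 ≤ Z ω)
    (ΩX ΩZ : ℝ) (hΩX : 0 < ΩX) (hΩZ : 0 < ΩZ)
    (hXexp : ∀ x : ℝ, 0 ≤ x → (ℙ {ω | x < X ω}).toReal = Real.exp (-x / ΩX))
    (hZexp : ∀ z : ℝ, 0 ≤ z → (ℙ {ω | z < Z ω}).toReal = Real.exp (-z / ΩZ))
    (hindep : IndepFun X Z ℙ)
    (α β : ℝ) (hα : 0 ≤ α) (hβ : 0 ≤ β) :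
    (ℙ {ω | α + β * Z ω ≤ X ω * Z ω}).toReal
      = (Real.exp (-β / ΩX) / ΩZ) *
        ∫ z in Ioi (0 : ℝ), Real.exp (-α / (ΩX * z) - z / ΩZ) := by
  have hr : (0:ℝ) < 1 / ΩZ := by positivity
  set μX := Measure.map X ℙ with hμX
  set μZ := Measure.map Z ℙ with hμZ
  have hprobZ : IsProbabilityMeasure μZ := Measure.isProbabilityMeasure_map hZm.aemeasurable
  have hmapPair : Measure.map (fun ω => (X ω, Z ω)) ℙ = μX.prod μZ :=
    (ProbabilityTheory.indepFun_iff_map_prod_eq_prod_map_map hXm.aemeasurable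
      hZm.aemeasurable).mp hindep
  have hS : MeasurableSet {p : ℝ × ℝ | α + β * p.2 ≤ p.1 * p.2} :=
    measurableSet_le (by fun_prop) (by fun_prop)
  -- Step 1: rewrite as a product-measure integral
  have step1 : ℙ {ω | α + β * Z ω ≤ X ω * Z ω}
      = ∫⁻ z, μX {x | α + β * z ≤ x * z} ∂μZ := by
    have h1 : ℙ {ω | α + β * Z ω ≤ X ω * Z ω}
        = Measure.map (fun ω => (X ω, Z ω)) ℙ {p : ℝ × ℝ | α + β * p.2 ≤ p.1 * p.2} := by
      rw [Measure.map_apply (hXm.prodMk hZm) hS]; rfl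
    rw [h1, hmapPair, Measure.prod_apply_symm hS]
    rfl
  -- a.e. positivity of z under μZ
  have hnull : μZ {z : ℝ | ¬ z ∈ Ioi (0:ℝ)} = 0 := by
    have hsetn : {z : ℝ | ¬ z ∈ Ioi (0:ℝ)} = Iic 0 := by ext z; simp [not_lt]
    rw [hsetn, hμZ, Measure.map_apply hZm measurableSet_Iic]
    have hset2 : Z ⁻¹' Iic 0 = {ω | (0:ℝ) < Z ω}ᶜ := by ext ω; simp [not_lt]
    rw [hset2, measure_compl (measurableSet_lt measurable_const hZm) (measure_ne_top _ _),
      measure_univ, exp_surv_lt Z ΩZ hZexp le_rfl]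
    simp
  have hae : ∀ᵐ z ∂μZ, z ∈ Ioi (0:ℝ) := hnull
  -- Step 2: identify the inner measure a.e.
  have step2 : ∫⁻ z, μX {x | α + β * z ≤ x * z} ∂μZ
      = ∫⁻ z, ENNReal.ofReal (Real.exp (-(α / z + β) / ΩX)) ∂μZ := by
    refine lintegral_congr_ae ?_
    filter_upwards [hae] with z hz
    have hz' : (0:ℝ) < z := hz
    have hset : {x : ℝ | α + β * z ≤ x * z} = Ici (α / z + β) := by
      ext x
      simp only [mem_setOf_eq, mem_Ici]
      rw [div_add' _ _ _ hz'.ne', div_le_iff₀ hz']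
    have hnn : 0 ≤ α / z + β := by positivity
    rw [hset, hμX, Measure.map_apply hXm measurableSet_Ici]
    exact exp_surv_le X hXm hX0 ΩX hXexp hnn
  -- Step 3: substitute the law of Z and unfold the density
  have hlaw : μZ = ProbabilityTheory.expMeasure (1 / ΩZ) :=
    exp_law Z hZm hZ0 ΩZ hΩZ hZexp
  have hgm : Measurable (fun z : ℝ => ENNReal.ofReal (Real.exp (-(α / z + β) / ΩX))) := by
    fun_prop
  have hpdfm : Measurable (ProbabilityTheory.exponentialPDF (1 / ΩZ)) := by
    have : ProbabilityTheory.exponentialPDF (1 / ΩZ)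
        = fun x => ENNReal.ofReal (if 0 ≤ x then (1/ΩZ) * Real.exp (-((1/ΩZ) * x)) else 0) := by
      funext x; exact ProbabilityTheory.exponentialPDF_eq _ _
    rw [this]
    apply ENNReal.measurable_ofReal.comp
    apply Measurable.ite measurableSet_Ici (by fun_prop) measurable_const
  have step3 : ∫⁻ z, ENNReal.ofReal (Real.exp (-(α / z + β) / ΩX)) ∂μZ
      = ∫⁻ z, ProbabilityTheory.exponentialPDF (1 / ΩZ) z
          * ENNReal.ofReal (Real.exp (-(α / z + β) / ΩX)) := by
    rw [hlaw, show ProbabilityTheory.expMeasure (1 / ΩZ)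
        = volume.withDensity (ProbabilityTheory.exponentialPDF (1 / ΩZ)) from rfl,
      lintegral_withDensity_eq_lintegral_mul _ hpdfm hgm]
    rfl
  -- Step 4: reduce to a set lintegral over `Ioi 0`
  set F : ℝ → ℝ := fun z => Real.exp (-β / ΩX) / ΩZ * Real.exp (-α / (ΩX * z) - z / ΩZ)
    with hFdef
  have step4 : ∫⁻ z, ProbabilityTheory.exponentialPDF (1 / ΩZ) z
          * ENNReal.ofReal (Real.exp (-(α / z + β) / ΩX))
      = ∫⁻ z in Ioi (0:ℝ), ENNReal.ofReal (F z) := by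
    rw [← lintegral_indicator measurableSet_Ioi]
    refine lintegral_congr_ae ?_
    have h0 : ∀ᵐ z : ℝ, z ≠ 0 := by
      refine (ae_iff).mpr ?_
      simp only [ne_eq, not_not]
      have : {z : ℝ | z = 0} = {0} := by ext z; simp
      rw [this]
      exact Real.volume_singleton
    filter_upwards [h0] with z hz0
    rcases lt_or_gt_of_ne hz0 with hneg | hpos
    · rw [ProbabilityTheory.exponentialPDF_of_neg hneg, zero_mul,
        indicator_of_notMem (by simpa using hneg.le)]
    · rw [ProbabilityTheory.exponentialPDF_of_nonneg hpos.le,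
        indicator_of_mem (by exact hpos), ← ENNReal.ofReal_mul (by positivity)]
      congr 1
      have hexp : Real.exp (-β / ΩX) / ΩZ * Real.exp (-α / (ΩX * z) - z / ΩZ)
          = 1 / ΩZ * Real.exp (-β / ΩX + (-α / (ΩX * z) - z / ΩZ)) := by
        rw [Real.exp_add]; ring
      rw [hFdef]
      simp only
      rw [hexp, mul_assoc, ← Real.exp_add]
      congr 2
      field_simp
      ring
  -- Conclude
  rw [step1, step2, step3, step4]
  have hFnn : 0 ≤ᵐ[volume.restrict (Ioi (0:ℝ))] F :=
    Filter.Eventually.of_forall (fun z => by positivity)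
  have hFm : AEStronglyMeasurable F (volume.restrict (Ioi (0:ℝ))) := by
    apply Measurable.aestronglyMeasurable
    fun_prop
  rw [← MeasureTheory.integral_eq_lintegral_of_nonneg_ae hFnn hFm, hFdef]
  simp only
  rw [MeasureTheory.integral_const_mul]
end

section
/- Let X, Y, Z be independent nonnegative real random variables, exponentially distributed with means Ω̂_R > 0, Ω̂_B > 0, Ω_RB > 0 respectively (P(X > x) = exp(−x/Ω̂_R), etc.). Let γ̄, A, G, C, D, Ω_ξ be positive real constants, define the SINR γ_F = A·X·γ̄ / (γ̄·(G·X + Ω_ξ + Z·(C·Y + D)) + 1), and let 0 < u < A/G. Then P(γ_F ≤ u) = 1 − ∫_0^∞ [Ω̂_R/(κ₂(z)·Ω̂_B + Ω̂_R)] · exp(−κ₃(z)/Ω̂_R) · (1/Ω_RB)·exp(−z/Ω_RB) dz, where κ₂(z) = u·C·z/(A − u·G) and κ₃(z) = u·(Ω_ξ + z·D + 1/γ̄)/(A − u·G). -/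
open MeasureTheory ProbabilityTheory Set

lemma law_eq_expMeasure {Ω : Type*} [MeasureSpace Ω] [IsProbabilityMeasure (ℙ : Measure Ω)]
    (X : Ω → ℝ) (hXm : Measurable X) (m : ℝ) (hm : 0 < m)
    (hexp : ∀ x : ℝ, 0 ≤ x → (ℙ {ω | x < X ω}).toReal = Real.exp (-x / m)) :
    Measure.map X ℙ = ProbabilityTheory.expMeasure (1/m) := by
  have hr : (0:ℝ) < 1/m := by positivity
  haveI : IsProbabilityMeasure (Measure.map X ℙ) := Measure.isProbabilityMeasure_map hXm.aemeasurable
  haveI : IsProbabilityMeasure (expMeasure (1/m)) := isProbabilityMeasure_expMeasure hr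
  have key : ∀ x : ℝ, 0 ≤ x → Measure.map X ℙ (Ioi x) = ENNReal.ofReal (Real.exp (-x / m)) := by
    intro x hx
    rw [Measure.map_apply hXm measurableSet_Ioi]
    have : X ⁻¹' Ioi x = {ω | x < X ω} := rfl
    rw [this, ← hexp x hx, ENNReal.ofReal_toReal (measure_ne_top _ _)]
  have hIic : ∀ a : ℝ, 0 ≤ a → Measure.map X ℙ (Iic a) = 1 - ENNReal.ofReal (Real.exp (-a / m)) := by
    intro a ha
    rw [← compl_Ioi, measure_compl measurableSet_Ioi (measure_ne_top _ _), measure_univ, key a ha]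
  refine Measure.ext_of_Iic _ _ (fun a => ?_)
  have hcdf : expMeasure (1/m) (Iic a)
      = ENNReal.ofReal (if 0 ≤ a then 1 - Real.exp (-(1/m * a)) else 0) := by
    rw [← cdf_expMeasure_eq hr a, cdf_eq_real, measureReal_def,
      ENNReal.ofReal_toReal (measure_ne_top _ _)]
  rcases le_or_gt 0 a with ha | ha
  · rw [hIic a ha, hcdf, if_pos ha]
    have harg : -(1/m * a) = -a / m := by ring
    rw [harg, ENNReal.ofReal_sub _ (Real.exp_pos _).le, ENNReal.ofReal_one]
  · have h0 : Measure.map X ℙ (Iic 0) = 0 := by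
      rw [hIic 0 le_rfl]; simp
    rw [measure_mono_null (Iic_subset_Iic.2 ha.le) h0, hcdf, if_neg (not_le.2 ha),
      ENNReal.ofReal_zero]

lemma expMeasure_eq_withDensity (r : ℝ) :
    expMeasure r = MeasureTheory.volume.withDensity (exponentialPDF r) := rfl

lemma lintegral_expMeasure (r : ℝ) (f : ℝ → ENNReal) (hf : Measurable f) :
    ∫⁻ y, f y ∂(expMeasure r) = ∫⁻ y in Ioi 0, ENNReal.ofReal (r * Real.exp (-(r*y))) * f y := by
  have hmeas : Measurable (exponentialPDF r) := (measurable_exponentialPDFReal r).ennreal_ofReal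
  rw [expMeasure_eq_withDensity, lintegral_withDensity_eq_lintegral_mul _ hmeas hf]
  rw [← lintegral_add_compl (f := fun y => (exponentialPDF r * f) y) (A := Ioi (0:ℝ))
      measurableSet_Ioi]
  have h2 : ∫⁻ y in (Ioi (0:ℝ))ᶜ, (exponentialPDF r * f) y = 0 := by
    rw [compl_Ioi]
    have : ∫⁻ y in Iic (0:ℝ), (exponentialPDF r * f) y
        = ∫⁻ y in Iio (0:ℝ), (exponentialPDF r * f) y := by
      refine setLIntegral_congr ?_
      exact (Iio_ae_eq_Iic (a := (0:ℝ))).symm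
    rw [this]
    rw [setLIntegral_congr_fun measurableSet_Iio (fun y hy => ?_), lintegral_zero]
    simp only [Pi.mul_apply, exponentialPDF_of_neg hy, zero_mul]
  rw [h2, add_zero]
  refine setLIntegral_congr_fun measurableSet_Ioi (fun y hy => ?_)
  simp only [Pi.mul_apply, exponentialPDF_of_nonneg (le_of_lt hy)]

lemma integral_exp_neg_mul_Ioi_zero {b : ℝ} (hb : 0 < b) :
    ∫ y in Ioi (0:ℝ), Real.exp (-(b*y)) = 1/b := by
  have := integral_comp_mul_left_Ioi (fun x => Real.exp (-x)) 0 hb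
  simp only [mul_zero, integral_exp_neg_Ioi_zero, smul_eq_mul, mul_one] at this
  rw [show (fun y => Real.exp (-(b*y))) = (fun y => Real.exp (-(b*y))) from rfl]
  calc ∫ y in Ioi (0:ℝ), Real.exp (-(b*y)) = b⁻¹ := this
    _ = 1/b := (one_div b).symm

lemma lintegral_exp_neg_expMeasure {r c : ℝ} (hr : 0 < r) (hc : 0 ≤ c) :
    ∫⁻ y, ENNReal.ofReal (Real.exp (-(c * y))) ∂(expMeasure r)
      = ENNReal.ofReal (r / (c + r)) := by
  rw [lintegral_expMeasure r _ (by fun_prop)]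
  have hstep : ∀ y ∈ Ioi (0:ℝ),
      ENNReal.ofReal (r * Real.exp (-(r*y))) * ENNReal.ofReal (Real.exp (-(c * y)))
        = ENNReal.ofReal (r * Real.exp (-((c+r)*y))) := by
    intro y hy
    rw [← ENNReal.ofReal_mul (by positivity)]
    congr 1
    rw [mul_assoc, ← Real.exp_add]
    congr 2
    ring
  rw [setLIntegral_congr_fun measurableSet_Ioi hstep]
  have hint : IntegrableOn (fun y => r * Real.exp (-((c+r)*y))) (Ioi (0:ℝ)) := by
    simp only [← neg_mul]
    exact (exp_neg_integrableOn_Ioi 0 (show 0 < c + r by positivity)).const_mul r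
  rw [← ofReal_integral_eq_lintegral_ofReal hint (ae_of_all _ (fun y => by positivity))]
  rw [MeasureTheory.integral_const_mul, integral_exp_neg_mul_Ioi_zero (by positivity)]
  congr 1
  field_simp

noncomputable def kfun (u C D Ωξ snr s : ℝ) (w : ℝ × ℝ) : ℝ :=
  u * C * w.2 / s * w.1 + u * (Ωξ + w.2 * D + 1 / snr) / s

lemma measurable_kfun (u C D Ωξ snr s : ℝ) : Measurable (kfun u C D Ωξ snr s) := by
  unfold kfun; fun_prop

lemma kfun_nonneg {u C D Ωξ snr s : ℝ} (hu : 0 < u) (hC : 0 < C) (hD : 0 < D)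
    (hΩξ : 0 < Ωξ) (hsnr : 0 < snr) (hs : 0 < s) {w : ℝ × ℝ} (h1 : 0 ≤ w.1) (h2 : 0 ≤ w.2) :
    0 ≤ kfun u C D Ωξ snr s w := by
  unfold kfun; positivity

/-- Intermediate single-integral form of the CDF of the far-signal SINR
`γ_F = A·X·γ̄/(γ̄(G·X + Ω_ξ + Z(C·Y + D)) + 1)` at `0 < u < A/G`, after integrating out
the exponential channel powers `X` and `Y`. -/
theorem cdf_sinr_far_integral_form
    {Ω : Type*} [MeasureSpace Ω] [IsProbabilityMeasure (ℙ : Measure Ω)]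
    (X Y Z : Ω → ℝ) (hXm : Measurable X) (hYm : Measurable Y) (hZm : Measurable Z)
    (hX0 : ∀ ω, 0 ≤ X ω) (hY0 : ∀ ω, 0 ≤ Y ω) (hZ0 : ∀ ω, 0 ≤ Z ω)
    (ΩR ΩB ΩRB : ℝ) (hΩR : 0 < ΩR) (hΩB : 0 < ΩB) (hΩRB : 0 < ΩRB)
    (hXexp : ∀ x : ℝ, 0 ≤ x → (ℙ {ω | x < X ω}).toReal = Real.exp (-x / ΩR))
    (hYexp : ∀ y : ℝ, 0 ≤ y → (ℙ {ω | y < Y ω}).toReal = Real.exp (-y / ΩB))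
    (hZexp : ∀ z : ℝ, 0 ≤ z → (ℙ {ω | z < Z ω}).toReal = Real.exp (-z / ΩRB))
    (hindep : iIndepFun ![X, Y, Z] ℙ)
    (snr A G C D Ωξ : ℝ) (hsnr : 0 < snr) (hA : 0 < A) (hG : 0 < G)
    (hC : 0 < C) (hD : 0 < D) (hΩξ : 0 < Ωξ)
    (u : ℝ) (hu0 : 0 < u) (hu : u < A / G) :
    (ℙ {ω | A * X ω * snr /
        (snr * (G * X ω + Ωξ + Z ω * (C * Y ω + D)) + 1) ≤ u}).toReal
      = 1 - ∫ z in Ioi (0 : ℝ),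
          (ΩR / (u * C * z / (A - u * G) * ΩB + ΩR)) *
            Real.exp (-(u * (Ωξ + z * D + 1 / snr) / (A - u * G)) / ΩR) *
            ((1 / ΩRB) * Real.exp (-z / ΩRB)) := by
  have hs : 0 < A - u * G := by
    have := (lt_div_iff₀ hG).mp hu
    linarith
  set s := A - u * G with hs_def
  set κ := kfun u C D Ωξ snr s with hκ_def
  have hκm : Measurable κ := measurable_kfun u C D Ωξ snr s
  -- event identity
  have hev : {ω | A * X ω * snr / (snr * (G * X ω + Ωξ + Z ω * (C * Y ω + D)) + 1) ≤ u}
      = {ω | κ (Y ω, Z ω) < X ω}ᶜ := by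
    ext ω
    simp only [Set.mem_setOf_eq, Set.mem_compl_iff, not_lt]
    have hx := hX0 ω; have hy := hY0 ω; have hz := hZ0 ω
    set x := X ω; set y := Y ω; set z := Z ω
    have hd : 0 < snr * (G * x + Ωξ + z * (C * y + D)) + 1 := by
      have h1 : 0 ≤ z * (C * y + D) := by positivity
      have h2 : 0 ≤ G * x := by positivity
      nlinarith
    rw [div_le_iff₀ hd]
    have hf : κ (y, z) = (u * snr * (Ωξ + z * (C * y + D)) + u) / (s * snr) := by
      rw [hκ_def]; unfold kfun
      field_simp
      ring
    rw [hf, le_div_iff₀ (by positivity)]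
    have hsA : x * (s * snr) = A * x * snr - u * G * x * snr := by rw [hs_def]; ring
    constructor <;> intro h <;> nlinarith [h, hsA]
  -- measurability of the event
  have hFm : Measurable (fun ω => κ (Y ω, Z ω)) := hκm.comp (hYm.prodMk hZm)
  have hEmeas : MeasurableSet {ω | κ (Y ω, Z ω) < X ω} := measurableSet_lt hFm hXm
  -- laws
  set μX := Measure.map X ℙ with hμX_def
  set μY := Measure.map Y ℙ with hμY_def
  set μZ := Measure.map Z ℙ with hμZ_def
  set μW := Measure.map (fun ω => (Y ω, Z ω)) ℙ with hμW_def
  haveI : IsProbabilityMeasure μX := Measure.isProbabilityMeasure_map hXm.aemeasurable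
  haveI : IsProbabilityMeasure μY := Measure.isProbabilityMeasure_map hYm.aemeasurable
  haveI : IsProbabilityMeasure μZ := Measure.isProbabilityMeasure_map hZm.aemeasurable
  haveI : IsProbabilityMeasure μW :=
    Measure.isProbabilityMeasure_map (hYm.prodMk hZm).aemeasurable
  have hYlaw : μY = expMeasure (1/ΩB) := law_eq_expMeasure Y hYm ΩB hΩB hYexp
  have hZlaw : μZ = expMeasure (1/ΩRB) := law_eq_expMeasure Z hZm ΩRB hΩRB hZexp
  have hXtail : ∀ t : ℝ, 0 ≤ t → μX (Ioi t) = ENNReal.ofReal (Real.exp (-t / ΩR)) := by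
    intro t ht
    rw [hμX_def, Measure.map_apply hXm measurableSet_Ioi]
    have : X ⁻¹' Ioi t = {ω | t < X ω} := rfl
    rw [this, ← hXexp t ht, ENNReal.ofReal_toReal (measure_ne_top _ _)]
  -- independence
  have hm : ∀ i, Measurable (![X, Y, Z] i) := by
    intro i; fin_cases i <;> simpa
  have hInd1 : IndepFun (fun ω => (Y ω, Z ω)) X ℙ := by
    have h := hindep.indepFun_prodMk hm 1 2 0 (by decide) (by decide)
    simpa using h
  have hInd2 : IndepFun Y Z ℙ := by
    have h := hindep.indepFun (show (1 : Fin 3) ≠ 2 by decide)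
    simpa using h
  have hmapprod : Measure.map (fun ω => ((Y ω, Z ω), X ω)) ℙ = μW.prod μX :=
    (indepFun_iff_map_prod_eq_prod_map_map (hYm.prodMk hZm).aemeasurable
      hXm.aemeasurable).mp hInd1
  have hWprod : μW = μY.prod μZ :=
    (indepFun_iff_map_prod_eq_prod_map_map hYm.aemeasurable hZm.aemeasurable).mp hInd2
  -- the set S
  set S : Set ((ℝ × ℝ) × ℝ) := {p | κ p.1 < p.2} with hS_def
  have hSmeas : MeasurableSet S := measurableSet_lt (hκm.comp measurable_fst) measurable_snd
  -- Step: probability of E as an integral over μW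
  have haeW : ∀ᵐ w ∂μW, 0 ≤ w.1 ∧ 0 ≤ w.2 := by
    have hp : MeasurableSet {w : ℝ × ℝ | 0 ≤ w.1 ∧ 0 ≤ w.2} :=
      (measurable_fst measurableSet_Ici).inter (measurable_snd measurableSet_Ici)
    rw [hμW_def]
    exact (MeasureTheory.ae_map_iff (hYm.prodMk hZm).aemeasurable hp).mpr
      (ae_of_all _ fun ω => ⟨hY0 ω, hZ0 ω⟩)
  have hE1 : ℙ {ω | κ (Y ω, Z ω) < X ω}
      = ∫⁻ w, ENNReal.ofReal (Real.exp (-(κ w) / ΩR)) ∂μW := by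
    have hpre : (fun ω => ((Y ω, Z ω), X ω)) ⁻¹' S = {ω | κ (Y ω, Z ω) < X ω} := rfl
    rw [← hpre, ← Measure.map_apply ((hYm.prodMk hZm).prodMk hXm) hSmeas, hmapprod,
      Measure.prod_apply hSmeas]
    refine lintegral_congr_ae (haeW.mono fun w hw => ?_)
    show μX (Prod.mk w ⁻¹' S) = ENNReal.ofReal (Real.exp (-κ w / ΩR))
    rw [show Prod.mk w ⁻¹' S = Ioi (κ w) from rfl,
      hXtail (κ w) (kfun_nonneg hu0 hC hD hΩξ hsnr hs hw.1 hw.2)]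
  -- a.e. nonneg for μZ
  have haeZ : ∀ᵐ z ∂μZ, 0 ≤ z := by
    rw [hμZ_def, ae_map_iff hZm.aemeasurable (measurableSet_Ici : MeasurableSet (Ici (0:ℝ)))]
    exact ae_of_all _ hZ0
  -- inner integral over Y
  have hE2 : ℙ {ω | κ (Y ω, Z ω) < X ω}
      = ∫⁻ z, ENNReal.ofReal ((ΩR / (u * C * z / s * ΩB + ΩR)) *
          Real.exp (-(u * (Ωξ + z * D + 1 / snr) / s) / ΩR)) ∂μZ := by
    rw [hE1, hWprod]
    rw [lintegral_prod_symm _ (by fun_prop : Measurable fun w : ℝ × ℝ =>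
      ENNReal.ofReal (Real.exp (-(κ w) / ΩR))).aemeasurable]
    refine lintegral_congr_ae (haeZ.mono fun z hz => ?_)
    have hκval : ∀ y : ℝ, κ (y, z) = u * C * z / s * y + u * (Ωξ + z * D + 1 / snr) / s := by
      intro y; rw [hκ_def]; unfold kfun; rfl
    have hsplit : ∀ y : ℝ, ENNReal.ofReal (Real.exp (-(κ (y, z)) / ΩR))
        = ENNReal.ofReal (Real.exp (-((u * C * z / s / ΩR) * y))) *
          ENNReal.ofReal (Real.exp (-(u * (Ωξ + z * D + 1 / snr) / s) / ΩR)) := by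
      intro y
      rw [← ENNReal.ofReal_mul (Real.exp_pos _).le, ← Real.exp_add]
      congr 1
      rw [hκval y]
      field_simp
      ring
    simp_rw [hsplit]
    rw [lintegral_mul_const' _ _ ENNReal.ofReal_ne_top, hYlaw,
      lintegral_exp_neg_expMeasure (by positivity) (by positivity)]
    rw [← ENNReal.ofReal_mul (by positivity)]
    congr 1
    have halg : 1 / ΩB / (u * C * z / s / ΩR + 1 / ΩB) = ΩR / (u * C * z / s * ΩB + ΩR) := by
      have hk : 0 ≤ u * C * z / s := by positivity
      rw [div_eq_div_iff (by positivity) (by positivity)]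
      field_simp
    rw [halg]
  -- from μZ to an explicit integral over Ioi 0
  have hE3 : ℙ {ω | κ (Y ω, Z ω) < X ω}
      = ∫⁻ z in Ioi (0:ℝ), ENNReal.ofReal ((ΩR / (u * C * z / s * ΩB + ΩR)) *
          Real.exp (-(u * (Ωξ + z * D + 1 / snr) / s) / ΩR) *
          ((1 / ΩRB) * Real.exp (-z / ΩRB))) := by
    rw [hE2, hZlaw, lintegral_expMeasure _ _ (by fun_prop)]
    refine setLIntegral_congr_fun measurableSet_Ioi (fun z hz => ?_)
    rw [← ENNReal.ofReal_mul (by positivity)]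
    congr 1
    rw [show -(1/ΩRB * z) = -z / ΩRB by ring]
    ring
  -- final assembly
  rw [hev, measure_compl hEmeas (measure_ne_top _ _), measure_univ,
    ENNReal.toReal_sub_of_le prob_le_one ENNReal.one_ne_top, ENNReal.toReal_one, hE3]
  congr 1
  have hnn : 0 ≤ᵐ[(volume : Measure ℝ).restrict (Ioi 0)] fun z : ℝ =>
      (ΩR / (u * C * z / s * ΩB + ΩR)) *
        Real.exp (-(u * (Ωξ + z * D + 1 / snr) / s) / ΩR) *
        ((1 / ΩRB) * Real.exp (-z / ΩRB)) := by
    refine (ae_restrict_iff' measurableSet_Ioi).mpr (ae_of_all _ fun z hz => ?_)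
    have hz' : (0:ℝ) < z := hz
    positivity
  have hsm : AEStronglyMeasurable (fun z : ℝ =>
      (ΩR / (u * C * z / s * ΩB + ΩR)) *
        Real.exp (-(u * (Ωξ + z * D + 1 / snr) / s) / ΩR) *
        ((1 / ΩRB) * Real.exp (-z / ΩRB))) ((volume : Measure ℝ).restrict (Ioi 0)) :=
    (by fun_prop : Measurable fun z : ℝ =>
      (ΩR / (u * C * z / s * ΩB + ΩR)) *
        Real.exp (-(u * (Ωξ + z * D + 1 / snr) / s) / ΩR) *
        ((1 / ΩRB) * Real.exp (-z / ΩRB))).aestronglyMeasurable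
  rw [integral_eq_lintegral_of_nonneg_ae hnn hsm]
end

section
/- Let X, Y, Z be independent nonnegative real random variables, exponentially distributed with means Ω̂_R > 0, Ω̂_B > 0, Ω_RB > 0 respectively. Let γ̄, G, C, D, Ω_ξ be positive real constants and define the SINR γ_N = G·X·γ̄ / (γ̄·(Ω_ξ + Z·(C·Y + D)) + 1). Then for every u > 0, P(γ_N ≤ u) = 1 − Θ₁(u)·exp(Θ₃(u))·∫_{Θ₂(u)}^∞ e^{−t}/t dt, where Θ₁(u) = Ω̂_R·G/(u·Ω_RB·Ω̂_B·C), Θ₂(u) = Θ₁(u)·(u·Ω_RB·D/(Ω̂_R·G) + 1), and Θ₃(u) = Θ₂(u) − u·Ω_ξ/(Ω̂_R·G) − u/(Ω̂_R·γ̄·G). -/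
open MeasureTheory ProbabilityTheory Set Real
open scoped NNReal ENNReal

noncomputable def theta1 (ΩR ΩB ΩRB G C : ℝ) (u : ℝ) : ℝ :=
  ΩR * G / (u * ΩRB * ΩB * C)

noncomputable def theta2 (ΩR ΩB ΩRB G C D : ℝ) (u : ℝ) : ℝ :=
  theta1 ΩR ΩB ΩRB G C u * (u * ΩRB * D / (ΩR * G) + 1)

noncomputable def theta3 (ΩR ΩB ΩRB G C D Ωξ snr : ℝ) (u : ℝ) : ℝ :=
  theta2 ΩR ΩB ΩRB G C D u - u * Ωξ / (ΩR * G) - u / (ΩR * snr * G)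

lemma integral_Ioi_comp_add_right (f : ℝ → ℝ) (a c : ℝ) :
    ∫ x in Ioi a, f (x + c) = ∫ x in Ioi (a + c), f x := by
  have h₁ : MeasurePreserving (fun x : ℝ => x + c) volume volume :=
    measurePreserving_add_right volume c
  have h₂ : MeasurableEmbedding (fun x : ℝ => x + c) :=
    (MeasurableEquiv.addRight c).measurableEmbedding
  have := h₁.setIntegral_preimage_emb h₂ f (Ioi (a + c))
  rw [← this]
  congr 1
  ext x
  simp

lemma integral_Ioi_exp_neg_mul {k : ℝ} (hk : 0 < k) :
    ∫ y in Ioi (0:ℝ), Real.exp (-(k * y)) = k⁻¹ := by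
  have := integral_comp_mul_left_Ioi (fun x => Real.exp (-x)) 0 hk
  simp only [mul_zero, integral_exp_neg_Ioi, neg_zero, Real.exp_zero, smul_eq_mul,
    mul_one] at this
  simpa using this

lemma map_eq_expLaw {Ω : Type*} [MeasureSpace Ω] [IsProbabilityMeasure (ℙ : Measure Ω)]
    (W : Ω → ℝ) (hm : Measurable W) (h0 : ∀ ω, 0 ≤ W ω) {m : ℝ} (hmpos : 0 < m)
    (htail : ∀ x : ℝ, 0 ≤ x → (ℙ {ω | x < W ω}).toReal = Real.exp (-x / m)) :
    (ℙ : Measure Ω).map W = volume.withDensity (exponentialPDF m⁻¹) := by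
  have hr : 0 < m⁻¹ := inv_pos.mpr hmpos
  refine MeasureTheory.Measure.ext_of_Iic _ _ (fun a => ?_)
  rw [Measure.map_apply hm measurableSet_Iic,
      withDensity_apply _ measurableSet_Iic,
      lintegral_exponentialPDF_eq_antiDeriv hr a]
  by_cases ha : 0 ≤ a
  · rw [if_pos ha]
    have hset : W ⁻¹' Iic a = {ω | a < W ω}ᶜ := by
      ext ω; simp [not_lt]
    have hmeas : MeasurableSet {ω | a < W ω} := hm measurableSet_Ioi
    have htr : (ℙ {ω | a < W ω}) = ENNReal.ofReal (Real.exp (-a / m)) := by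
      rw [← htail a ha, ENNReal.ofReal_toReal (measure_ne_top _ _)]
    rw [hset, prob_compl_eq_one_sub hmeas, htr]
    have : -(m⁻¹ * a) = -a / m := by field_simp
    rw [this, ENNReal.ofReal_sub 1 (Real.exp_nonneg _), ENNReal.ofReal_one]
  · rw [if_neg ha]
    have : W ⁻¹' Iic a = ∅ := by
      ext ω; simp only [mem_preimage, mem_Iic, mem_empty_iff_false, iff_false, not_le]
      exact lt_of_lt_of_le (not_le.mp ha) (h0 ω)
    simp [this]

lemma integral_expLaw {r : ℝ} (hr : 0 < r) (h : ℝ → ℝ) :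
    ∫ x, h x ∂(volume.withDensity (exponentialPDF r))
      = ∫ x in Ioi 0, r * Real.exp (-(r * x)) * h x := by
  have hd : volume.withDensity (exponentialPDF r)
      = volume.withDensity (fun x => ((Real.toNNReal (if 0 ≤ x then r * Real.exp (-(r * x)) else 0) : ℝ≥0) : ℝ≥0∞)) := by
    congr 1
    funext x
    rw [exponentialPDF_eq]
    rfl
  have hmeasnn : Measurable fun x => Real.toNNReal (if 0 ≤ x then r * Real.exp (-(r * x)) else 0) := by
    apply Measurable.real_toNNReal
    apply Measurable.ite measurableSet_Ici
    · exact ((measurable_id.const_mul r).neg.exp.const_mul r)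
    · exact measurable_const
  rw [hd, integral_withDensity_eq_integral_smul hmeasnn]
  have hind : ∀ x : ℝ, (Real.toNNReal (if 0 ≤ x then r * Real.exp (-(r * x)) else 0)) • h x
      = Set.indicator (Ici 0) (fun y => r * Real.exp (-(r * y)) * h y) x := by
    intro x
    rw [NNReal.smul_def, smul_eq_mul]
    by_cases hx : 0 ≤ x
    · rw [if_pos hx, Set.indicator_of_mem (mem_Ici.mpr hx), Real.coe_toNNReal _ (by positivity)]
    · rw [if_neg hx, Set.indicator_of_notMem (by simpa using hx)]
      simp
  simp_rw [hind]
  rw [integral_indicator measurableSet_Ici, integral_Ici_eq_integral_Ioi]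

lemma expLaw_ae_nonneg {r : ℝ} :
    ∀ᵐ x ∂(volume.withDensity (exponentialPDF r)), 0 ≤ x := by
  rw [ae_iff]
  have : {x : ℝ | ¬ 0 ≤ x} = Iio 0 := by ext x; simp
  rw [this, withDensity_apply _ measurableSet_Iio,
    lintegral_exponentialPDF_of_nonpos le_rfl]

set_option maxHeartbeats 1000000 in
/-- Lemma 2 of the paper: the CDF of the near user's own-signal SINR
`γ_N = G·X·γ̄/(γ̄(Ω_ξ + Z(C·Y + D)) + 1)` at `u > 0` equals
`1 + Θ₁(u)·Ei(-Θ₂(u))·exp(Θ₃(u))`, where `Ei(-x) = -∫_x^∞ e^(-t)/t dt`. -/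
theorem cdf_sinr_near_own_signal
    {Ω : Type*} [MeasureSpace Ω] [IsProbabilityMeasure (ℙ : Measure Ω)]
    (X Y Z : Ω → ℝ) (hXm : Measurable X) (hYm : Measurable Y) (hZm : Measurable Z)
    (hX0 : ∀ ω, 0 ≤ X ω) (hY0 : ∀ ω, 0 ≤ Y ω) (hZ0 : ∀ ω, 0 ≤ Z ω)
    (ΩR ΩB ΩRB : ℝ) (hΩR : 0 < ΩR) (hΩB : 0 < ΩB) (hΩRB : 0 < ΩRB)
    (hXexp : ∀ x : ℝ, 0 ≤ x → (ℙ {ω | x < X ω}).toReal = Real.exp (-x / ΩR))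
    (hYexp : ∀ y : ℝ, 0 ≤ y → (ℙ {ω | y < Y ω}).toReal = Real.exp (-y / ΩB))
    (hZexp : ∀ z : ℝ, 0 ≤ z → (ℙ {ω | z < Z ω}).toReal = Real.exp (-z / ΩRB))
    (hindep : iIndepFun ![X, Y, Z] ℙ)
    (snr G C D Ωξ : ℝ) (hsnr : 0 < snr) (hG : 0 < G)
    (hC : 0 < C) (hD : 0 < D) (hΩξ : 0 < Ωξ)
    (u : ℝ) (hu0 : 0 < u) :
    (ℙ {ω | G * X ω * snr /
        (snr * (Ωξ + Z ω * (C * Y ω + D)) + 1) ≤ u}).toReal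
      = 1 - theta1 ΩR ΩB ΩRB G C u * Real.exp (theta3 ΩR ΩB ΩRB G C D Ωξ snr u) *
          ∫ t in Ioi (theta2 ΩR ΩB ΩRB G C D u), Real.exp (-t) / t := by
  have hGsnr : (0:ℝ) < G * snr := mul_pos hG hsnr
  set T1 := theta1 ΩR ΩB ΩRB G C u with hT1
  set T2 := theta2 ΩR ΩB ΩRB G C D u with hT2
  set T3 := theta3 ΩR ΩB ΩRB G C D Ωξ snr u with hT3
  set F : ℝ → ℝ := fun t => Real.exp (-t) / t with hF
  set φ : ℝ × ℝ → ℝ := fun w => u * (snr * (Ωξ + w.1 * (C * w.2 + D)) + 1) / (G * snr)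
    with hφ
  set g : ℝ × ℝ → ℝ := fun w => Real.exp (-(φ w / ΩR)) with hg
  set aa : ℝ := u * Ωξ / (ΩR * G) + u / (ΩR * snr * G) with haa
  set bb : ℝ := u / (G * ΩR) with hbb
  have hbb0 : 0 < bb := by rw [hbb]; positivity
  have hφdec : ∀ w : ℝ × ℝ, φ w / ΩR = aa + bb * w.1 * (C * w.2 + D) := by
    intro w
    rw [hφ, haa, hbb]
    field_simp
    ring
  have hden : ∀ ω, 0 < snr * (Ωξ + Z ω * (C * Y ω + D)) + 1 := by
    intro ω
    have h1 : 0 ≤ Z ω * (C * Y ω + D) :=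
      mul_nonneg (hZ0 ω) (by nlinarith [hY0 ω])
    nlinarith
  -- step 1: complement
  have hev : {ω | G * X ω * snr / (snr * (Ωξ + Z ω * (C * Y ω + D)) + 1) ≤ u}
      = {ω | φ (Z ω, Y ω) < X ω}ᶜ := by
    ext ω
    simp only [mem_setOf_eq, mem_compl_iff, not_lt]
    rw [div_le_iff₀ (hden ω), hφ]
    simp only
    rw [le_div_iff₀ hGsnr]
    constructor <;> intro h <;> nlinarith [h]
  have hφm : Measurable φ := by
    apply Measurable.div_const
    fun_prop
  have hφcont2 : Measurable fun ω => φ (Z ω, Y ω) := hφm.comp (hZm.prodMk hYm)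
  have hmeasev : MeasurableSet {ω | φ (Z ω, Y ω) < X ω} :=
    measurableSet_lt hφcont2 hXm
  rw [hev, prob_compl_eq_one_sub hmeasev, ENNReal.toReal_sub_of_le prob_le_one ENNReal.one_ne_top,
    ENNReal.toReal_one]
  -- now compute the tail probability
  have hrB : (0:ℝ) < ΩB⁻¹ := inv_pos.mpr hΩB
  have hrRB : (0:ℝ) < ΩRB⁻¹ := inv_pos.mpr hΩRB
  set μB := volume.withDensity (exponentialPDF ΩB⁻¹) with hμB
  set μRB := volume.withDensity (exponentialPDF ΩRB⁻¹) with hμRB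
  have hmapY : (ℙ : Measure Ω).map Y = μB := map_eq_expLaw Y hYm hY0 hΩB hYexp
  have hmapZ : (ℙ : Measure Ω).map Z = μRB := map_eq_expLaw Z hZm hZ0 hΩRB hZexp
  have hinstB : IsProbabilityMeasure μB := by
    rw [← hmapY]; exact Measure.isProbabilityMeasure_map hYm.aemeasurable
  have hinstRB : IsProbabilityMeasure μRB := by
    rw [← hmapZ]; exact Measure.isProbabilityMeasure_map hZm.aemeasurable
  have hfm : ∀ i, Measurable (![X, Y, Z] i) := by
    intro i; fin_cases i <;> simpa
  have hW : Measurable fun ω => (Z ω, Y ω) := hZm.prodMk hYm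
  have hWX : IndepFun (fun ω => (Z ω, Y ω)) X ℙ := by
    have h := hindep.indepFun_prodMk hfm 2 1 0 (by decide) (by decide)
    simpa using h
  have hZY : IndepFun Z Y ℙ := by
    have h := hindep.indepFun (show (2 : Fin 3) ≠ 1 by decide)
    simpa using h
  have hmapWX : (ℙ : Measure Ω).map (fun ω => ((Z ω, Y ω), X ω))
      = ((ℙ : Measure Ω).map fun ω => (Z ω, Y ω)).prod ((ℙ : Measure Ω).map X) :=
    (indepFun_iff_map_prod_eq_prod_map_map hW.aemeasurable hXm.aemeasurable).mp hWX
  have hmapW : (ℙ : Measure Ω).map (fun ω => (Z ω, Y ω)) = μRB.prod μB := by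
    rw [(indepFun_iff_map_prod_eq_prod_map_map hZm.aemeasurable hYm.aemeasurable).mp hZY,
      hmapZ, hmapY]
  have hS : MeasurableSet {p : (ℝ × ℝ) × ℝ | φ p.1 < p.2} :=
    measurableSet_lt (hφm.comp measurable_fst) measurable_snd
  have hφnn : ∀ ω, 0 ≤ φ (Z ω, Y ω) := by
    intro ω
    have h1 : 0 < snr * (Ωξ + Z ω * (C * Y ω + D)) + 1 := hden ω
    rw [hφ]
    simp only
    positivity
  have htailX : ∀ t : ℝ, 0 ≤ t → (ℙ : Measure Ω).map X (Ioi t)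
      = ENNReal.ofReal (Real.exp (-(t / ΩR))) := by
    intro t ht
    rw [Measure.map_apply hXm measurableSet_Ioi]
    have : X ⁻¹' Ioi t = {ω | t < X ω} := rfl
    rw [this, ← neg_div, ← hXexp t ht, ENNReal.ofReal_toReal (measure_ne_top _ _)]
  have haeprod : ∀ᵐ w ∂(μRB.prod μB), 0 ≤ φ w := by
    rw [← hmapW]
    exact (ae_map_iff hW.aemeasurable (measurableSet_le measurable_const hφm)).mpr
      (ae_of_all _ hφnn)
  have hgcont : Continuous g := by
    rw [hg]
    fun_prop
  have hgint : Integrable g (μRB.prod μB) := by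
    refine Integrable.mono' (integrable_const 1) hgcont.aestronglyMeasurable ?_
    filter_upwards [haeprod] with w hw
    rw [hg]
    simp only [Real.norm_eq_abs, abs_of_pos (Real.exp_pos _)]
    apply Real.exp_le_one_iff.mpr
    simp only [neg_nonpos]
    positivity
  -- the tail probability as an integral
  have key : ℙ {ω | φ (Z ω, Y ω) < X ω} = ENNReal.ofReal (∫ w, g w ∂(μRB.prod μB)) := by
    have h1 : {ω | φ (Z ω, Y ω) < X ω}
        = (fun ω => ((Z ω, Y ω), X ω)) ⁻¹' {p : (ℝ × ℝ) × ℝ | φ p.1 < p.2} := rfl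
    rw [h1, ← Measure.map_apply (hW.prodMk hXm) hS, hmapWX, Measure.prod_apply hS]
    have hpre : ∀ w : ℝ × ℝ, Prod.mk w ⁻¹' {p : (ℝ × ℝ) × ℝ | φ p.1 < p.2} = Ioi (φ w) :=
      fun w => rfl
    simp_rw [hpre]
    have hae : ∀ᵐ w ∂((ℙ : Measure Ω).map (fun ω => (Z ω, Y ω))), 0 ≤ φ w :=
      (ae_map_iff hW.aemeasurable (measurableSet_le measurable_const hφm)).mpr
        (ae_of_all _ hφnn)
    rw [lintegral_congr_ae (hae.mono fun w hw => by rw [htailX _ hw])]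
    rw [hmapW] at hae ⊢
    rw [← ofReal_integral_eq_lintegral_ofReal hgint
      (ae_of_all _ fun w => Real.exp_nonneg _)]
  rw [key, ENNReal.toReal_ofReal (integral_nonneg fun w => Real.exp_nonneg _)]
  -- now compute the double integral
  congr 1
  rw [integral_prod _ hgint]
  set β : ℝ := ΩRB⁻¹ + bb * D with hβd
  set cst : ℝ := T1 * Real.exp T3 * β with hcst
  have hT1pos : 0 < T1 := by
    rw [hT1, theta1]
    exact div_pos (mul_pos hΩR hG) (mul_pos (mul_pos (mul_pos hu0 hΩRB) hΩB) hC)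
  have hT2pos : 0 < T2 := by
    rw [hT2, theta2, ← hT1]
    refine mul_pos hT1pos (add_pos ?_ one_pos)
    exact div_pos (mul_pos (mul_pos hu0 hΩRB) hD) (mul_pos hΩR hG)
  have hβpos : 0 < β := add_pos hrRB (mul_pos hbb0 hD)
  have hT3eq : T3 = T2 - aa := by
    rw [hT3, theta3, ← hT2, haa]; ring
  -- inner integral
  have hinner : ∀ z : ℝ, 0 ≤ z → ∫ y, g (z, y) ∂μB
      = ΩB⁻¹ * Real.exp (-(aa + bb * D * z)) * (ΩB⁻¹ + bb * C * z)⁻¹ := by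
    intro z hz
    have hk : (0:ℝ) < ΩB⁻¹ + bb * C * z :=
      add_pos_of_pos_of_nonneg hrB (mul_nonneg (mul_nonneg hbb0.le hC.le) hz)
    rw [hμB, integral_expLaw hrB]
    have hptw : ∀ y : ℝ, ΩB⁻¹ * Real.exp (-(ΩB⁻¹ * y)) * g (z, y)
        = ΩB⁻¹ * Real.exp (-(aa + bb * D * z)) * Real.exp (-((ΩB⁻¹ + bb * C * z) * y)) := by
      intro y
      rw [hg]
      simp only
      rw [hφdec (z, y)]
      simp only
      rw [mul_assoc, ← Real.exp_add]
      conv_rhs => rw [mul_assoc, ← Real.exp_add]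
      congr 1
      exact congrArg Real.exp (by ring)
    simp_rw [hptw]
    rw [MeasureTheory.integral_const_mul, integral_Ioi_exp_neg_mul hk]
  have houter : ∫ z, (∫ y, g (z, y) ∂μB) ∂μRB
      = ∫ z, (ΩB⁻¹ * Real.exp (-(aa + bb * D * z)) * (ΩB⁻¹ + bb * C * z)⁻¹) ∂μRB := by
    refine integral_congr_ae ?_
    have hzae : ∀ᵐ z ∂μRB, 0 ≤ z := by rw [hμRB]; exact expLaw_ae_nonneg
    filter_upwards [hzae] with z hz
    exact hinner z hz
  rw [houter, hμRB, integral_expLaw hrRB]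
  have hpt : ∀ z ∈ Ioi (0:ℝ),
      ΩRB⁻¹ * Real.exp (-(ΩRB⁻¹ * z)) *
        (ΩB⁻¹ * Real.exp (-(aa + bb * D * z)) * (ΩB⁻¹ + bb * C * z)⁻¹)
      = cst * F (β * z + T2) := by
    intro z hz
    have hz' : (0:ℝ) < z := hz
    have hd1 : (0:ℝ) < ΩB⁻¹ + bb * C * z :=
      add_pos hrB (mul_pos (mul_pos hbb0 hC) hz')
    have hd2 : (0:ℝ) < β * z + T2 := add_pos (mul_pos hβpos hz') hT2pos
    have hkey : ΩRB⁻¹ * ΩB⁻¹ * (β * z + T2) = T1 * β * (ΩB⁻¹ + bb * C * z) := by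
      rw [hβd, hT2, theta2, theta1, hT1, theta1, hbb]
      field_simp
      ring
    have hfrac : ΩRB⁻¹ * ΩB⁻¹ / (ΩB⁻¹ + bb * C * z) = T1 * β / (β * z + T2) :=
      (div_eq_div_iff hd1.ne' hd2.ne').mpr hkey
    have m1 : Real.exp (-(ΩRB⁻¹ * z)) * Real.exp (-(aa + bb * D * z))
        = Real.exp (-aa) * Real.exp (-(β * z)) := by
      rw [← Real.exp_add, ← Real.exp_add]
      congr 1
      rw [hβd]; ring
    calc ΩRB⁻¹ * Real.exp (-(ΩRB⁻¹ * z)) *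
        (ΩB⁻¹ * Real.exp (-(aa + bb * D * z)) * (ΩB⁻¹ + bb * C * z)⁻¹)
        = (ΩRB⁻¹ * ΩB⁻¹ / (ΩB⁻¹ + bb * C * z)) *
            (Real.exp (-(ΩRB⁻¹ * z)) * Real.exp (-(aa + bb * D * z))) := by ring
      _ = (T1 * β / (β * z + T2)) * (Real.exp (-aa) * Real.exp (-(β * z))) := by
            rw [hfrac, m1]
      _ = cst * F (β * z + T2) := by
            rw [hcst, hF]
            simp only
            have h1 : Real.exp (-(β * z + T2)) = Real.exp (-(β * z)) * Real.exp (-T2) := by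
              rw [← Real.exp_add]; congr 1; ring
            have h2 : Real.exp (-aa) = Real.exp T3 * Real.exp (-T2) := by
              rw [hT3eq, ← Real.exp_add]; congr 1; ring
            rw [h1, h2]
            ring
  rw [setIntegral_congr_fun measurableSet_Ioi hpt, MeasureTheory.integral_const_mul]
  have hsub : ∫ z in Ioi (0:ℝ), F (β * z + T2) = β⁻¹ * ∫ t in Ioi T2, F t := by
    have h1 := integral_comp_mul_left_Ioi (fun w => F (w + T2)) 0 hβpos
    simp only [mul_zero, smul_eq_mul] at h1
    rw [h1, integral_Ioi_comp_add_right F 0 T2, zero_add]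
  rw [hsub, hcst]
  field_simp
end

section
/- Let X and Z be independent nonnegative real random variables, exponentially distributed with means Ω̂_B > 0 and Ω_RB > 0 respectively. Let γ̄, C, D, Ω_ξ be positive real constants and define the SINR γ_C = C·X·Z·γ̄ / (γ̄·(Ω_ξ + Z·D) + 1). Then for every u > 0, P(γ_C ≤ u) = 1 − (exp(−ϖ₂(u))/Ω_RB) · ∫_0^∞ exp(−κ₅(u)/y − y/Ω_RB) dy, where κ₅(u) = u·(γ̄·Ω_ξ + 1)/(Ω̂_B·C·γ̄) and ϖ₂(u) = u·D/(Ω̂_B·C). -/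
open MeasureTheory ProbabilityTheory Set

/-- Lemma 3 of the paper: the CDF of the backscatter-signal SINR
`γ_C = C·X·Z·γ̄/(γ̄(Ω_ξ + Z·D) + 1)` at `u > 0` equals
`1 - (exp(-ϖ₂(u))/Ω_RB)·∫_0^∞ exp(-κ₅(u)/y - y/Ω_RB) dy`, with
`κ₅(u) = u(γ̄Ω_ξ + 1)/(Ω̂_B C γ̄)` and `ϖ₂(u) = u·D/(Ω̂_B C)`. -/
theorem cdf_sinr_backscatter
    {Ω : Type*} [MeasureSpace Ω] [IsProbabilityMeasure (ℙ : Measure Ω)]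
    (X Z : Ω → ℝ) (hXm : Measurable X) (hZm : Measurable Z)
    (hX0 : ∀ ω, 0 ≤ X ω) (hZ0 : ∀ ω, 0 ≤ Z ω)
    (ΩB ΩRB : ℝ) (hΩB : 0 < ΩB) (hΩRB : 0 < ΩRB)
    (hXexp : ∀ x : ℝ, 0 ≤ x → (ℙ {ω | x < X ω}).toReal = Real.exp (-x / ΩB))
    (hZexp : ∀ z : ℝ, 0 ≤ z → (ℙ {ω | z < Z ω}).toReal = Real.exp (-z / ΩRB))
    (hindep : IndepFun X Z ℙ)
    (snr C D Ωξ : ℝ) (hsnr : 0 < snr) (hC : 0 < C) (hD : 0 < D) (hΩξ : 0 < Ωξ)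
    (u : ℝ) (hu0 : 0 < u) :
    (ℙ {ω | C * X ω * Z ω * snr / (snr * (Ωξ + Z ω * D) + 1) ≤ u}).toReal
      = 1 - (Real.exp (-(u * D / (ΩB * C))) / ΩRB) *
          ∫ y in Ioi (0 : ℝ),
            Real.exp (-(u * (snr * Ωξ + 1) / (ΩB * C * snr)) / y - y / ΩRB) := by
  set κ : ℝ := u * (snr * Ωξ + 1) / (ΩB * C * snr) with hκdef
  set c : ℝ := Real.exp (-(u * D / (ΩB * C))) / ΩRB with hcdef
  set g : ℝ → ℝ := fun z => u * (snr * (Ωξ + z * D) + 1) / (C * z * snr) with hgdef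
  set f : ℝ → ℝ := fun y => Real.exp (-κ / y - y / ΩRB) with hfdef
  have hκ0 : 0 ≤ κ := by positivity
  set r : ℝ := 1 / ΩRB with hrdef
  have hrpos : 0 < r := by positivity
  -- the law of Z is the exponential measure with rate r
  have hmapZ : Measure.map Z ℙ = expMeasure r := by
    refine Measure.ext_of_Iic _ _ (fun a => ?_)
    have hrhs : expMeasure r (Iic a)
        = ENNReal.ofReal (if 0 ≤ a then 1 - Real.exp (-(r * a)) else 0) := by
      have : expMeasure r = MeasureTheory.volume.withDensity (exponentialPDF r) := rfl
      rw [this, withDensity_apply _ measurableSet_Iic]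
      exact lintegral_exponentialPDF_eq_antiDeriv hrpos a
    rw [Measure.map_apply hZm measurableSet_Iic, hrhs]
    by_cases ha : 0 ≤ a
    · rw [if_pos ha]
      have hset : Z ⁻¹' Iic a = {ω | a < Z ω}ᶜ := by
        ext ω; simp [not_lt]
      have hms : MeasurableSet {ω | a < Z ω} := measurableSet_lt measurable_const hZm
      have htail : ℙ {ω | a < Z ω} = ENNReal.ofReal (Real.exp (-a / ΩRB)) := by
        rw [← hZexp a ha, ENNReal.ofReal_toReal (measure_ne_top _ _)]
      have hea : Real.exp (-a / ΩRB) = Real.exp (-(r * a)) := by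
        congr 1; rw [hrdef]; ring
      rw [hset, measure_compl hms (measure_ne_top _ _), measure_univ, htail, hea,
        ENNReal.ofReal_sub _ (Real.exp_nonneg _), ENNReal.ofReal_one]
    · rw [if_neg ha]
      have hset : Z ⁻¹' Iic a = ∅ := by
        ext ω
        simp only [mem_preimage, mem_Iic, mem_empty_iff_false, iff_false, not_le]
        exact lt_of_lt_of_le (lt_of_not_ge ha) (hZ0 ω)
      simp [hset]
  -- pointwise characterization of the complement event
  have key : ∀ x z : ℝ, 0 ≤ z →
      (u < C * x * z * snr / (snr * (Ωξ + z * D) + 1) ↔ 0 < z ∧ g z < x) := by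
    intro x z hz
    have hzD : 0 ≤ z * D := mul_nonneg hz hD.le
    have hden : 0 < snr * (Ωξ + z * D) + 1 := by nlinarith
    rw [lt_div_iff₀ hden]
    constructor
    · intro h
      have hz' : 0 < z := by
        rcases hz.lt_or_eq with h' | h'
        · exact h'
        · exfalso
          rw [← h'] at h
          nlinarith [mul_pos hu0 (mul_pos hsnr hΩξ)]
      refine ⟨hz', ?_⟩
      rw [hgdef, div_lt_iff₀ (by positivity : (0:ℝ) < C * z * snr)]
      nlinarith
    · rintro ⟨hz', h⟩
      rw [hgdef, div_lt_iff₀ (by positivity : (0:ℝ) < C * z * snr)] at h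
      nlinarith
  -- the event and its complement
  set E : Set Ω := {ω | C * X ω * Z ω * snr / (snr * (Ωξ + Z ω * D) + 1) ≤ u} with hEdef
  have hnum : Measurable fun ω => C * X ω * Z ω * snr :=
    ((hXm.const_mul C).mul hZm).mul_const snr
  have hden : Measurable fun ω => snr * (Ωξ + Z ω * D) + 1 :=
    (((hZm.mul_const D).const_add Ωξ).const_mul snr).add_const 1
  have hEm : MeasurableSet E := measurableSet_le (hnum.div hden) measurable_const
  set S : Set (ℝ × ℝ) := {p : ℝ × ℝ | 0 < p.2 ∧ g p.2 < p.1} with hSdef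
  have hgm : Measurable g :=
    (((((measurable_id.mul_const D).const_add Ωξ).const_mul snr).add_const 1).const_mul u).div
      ((measurable_id.const_mul C).mul_const snr)
  have hSm : MeasurableSet S :=
    (measurableSet_lt measurable_const measurable_snd).inter
      (measurableSet_lt (hgm.comp measurable_snd) measurable_fst)
  have hEc : Eᶜ = (fun ω => (X ω, Z ω)) ⁻¹' S := by
    ext ω
    simp only [hEdef, mem_compl_iff, mem_setOf_eq, not_le, mem_preimage, hSdef]
    exact key (X ω) (Z ω) (hZ0 ω)
  -- compute the measure of the complement via the product law
  haveI : IsProbabilityMeasure (Measure.map X ℙ) := Measure.isProbabilityMeasure_map hXm.aemeasurable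
  haveI : IsProbabilityMeasure (Measure.map Z ℙ) := Measure.isProbabilityMeasure_map hZm.aemeasurable
  have hprod : Measure.map (fun ω => (X ω, Z ω)) ℙ = (Measure.map X ℙ).prod (Measure.map Z ℙ) :=
    (indepFun_iff_map_prod_eq_prod_map_map hXm.aemeasurable hZm.aemeasurable).mp hindep
  have hPc : ℙ Eᶜ = ((Measure.map X ℙ).prod (Measure.map Z ℙ)) S := by
    rw [hEc, ← Measure.map_apply (hXm.prodMk hZm) hSm, hprod]
  -- slice computation
  have hslice : ∀ z : ℝ, (Measure.map X ℙ) ((fun x => (x, z)) ⁻¹' S)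
      = Set.indicator (Ioi (0:ℝ)) (fun z => ENNReal.ofReal (Real.exp (-(g z) / ΩB))) z := by
    intro z
    by_cases hz : 0 < z
    · have hset : (fun x => (x, z)) ⁻¹' S = Ioi (g z) := by
        ext x; simp [hSdef, hz]
      have hg0 : 0 ≤ g z := by
        have hzD : 0 ≤ z * D := mul_nonneg hz.le hD.le
        have : 0 < snr * (Ωξ + z * D) + 1 := by nlinarith
        positivity
      rw [hset, Measure.map_apply hXm measurableSet_Ioi,
        Set.indicator_of_mem (mem_Ioi.mpr hz)]
      have : X ⁻¹' Ioi (g z) = {ω | g z < X ω} := rfl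
      rw [this, ← hXexp (g z) hg0, ENNReal.ofReal_toReal (measure_ne_top _ _)]
    · have hset : (fun x => (x, z)) ⁻¹' S = ∅ := by
        ext x; simp [hSdef, hz]
      rw [hset, Set.indicator_of_notMem (by simpa using hz)]
      simp
  -- the integrand identity on `Ioi 0`
  have hexp_eq : ∀ z : ℝ, 0 < z →
      r * Real.exp (-(r * z)) * Real.exp (-(g z) / ΩB) = c * f z := by
    intro z hz
    have harg : -(r * z) + -(g z) / ΩB = -(u * D / (ΩB * C)) + (-κ / z - z / ΩRB) := by
      rw [hrdef, hgdef, hκdef]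
      field_simp
      ring
    rw [hcdef, hfdef, mul_assoc, ← Real.exp_add, harg, Real.exp_add, hrdef]
    ring
  -- integrability of f on Ioi 0
  have hfm : Measurable f := by
    apply Real.measurable_exp.comp
    exact ((measurable_const.div measurable_id).sub (measurable_id.div_const ΩRB))
  have hint : IntegrableOn f (Ioi (0:ℝ)) := by
    refine Integrable.mono (exp_neg_integrableOn_Ioi 0 hrpos)
      (hfm.aestronglyMeasurable.restrict) ?_
    filter_upwards [ae_restrict_mem measurableSet_Ioi] with z hz
    rw [Real.norm_eq_abs, Real.norm_eq_abs, Real.abs_exp, Real.abs_exp]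
    apply Real.exp_le_exp.mpr
    have h1 : -κ / z ≤ 0 := div_nonpos_of_nonpos_of_nonneg (neg_nonpos.mpr hκ0) (le_of_lt hz)
    have h2 : z / ΩRB = r * z := by rw [hrdef]; ring
    linarith [h1, h2.ge]
  have hf0 : ∀ z : ℝ, 0 ≤ f z := fun z => Real.exp_nonneg _
  have hc0 : 0 ≤ c := by positivity
  -- compute ℙ Eᶜ
  have hPc2 : ℙ Eᶜ = ENNReal.ofReal (c * ∫ y in Ioi (0:ℝ), f y) := by
    rw [hPc, Measure.prod_apply_symm hSm]
    calc ∫⁻ z, (Measure.map X ℙ) ((fun x => (x, z)) ⁻¹' S) ∂(Measure.map Z ℙ)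
        = ∫⁻ z, Set.indicator (Ioi (0:ℝ))
            (fun z => ENNReal.ofReal (Real.exp (-(g z) / ΩB))) z ∂(Measure.map Z ℙ) := by
          exact lintegral_congr hslice
      _ = ∫⁻ z in Ioi (0:ℝ), ENNReal.ofReal (Real.exp (-(g z) / ΩB)) ∂(Measure.map Z ℙ) := by
          rw [lintegral_indicator measurableSet_Ioi]
      _ = ∫⁻ z in Ioi (0:ℝ), ENNReal.ofReal (Real.exp (-(g z) / ΩB))
            ∂(MeasureTheory.volume.withDensity (exponentialPDF r)) := by rw [hmapZ]; rfl
      _ = ∫⁻ z in Ioi (0:ℝ),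
            exponentialPDF r z * ENNReal.ofReal (Real.exp (-(g z) / ΩB)) := by
          have hpdfm : Measurable (exponentialPDF r) :=
            (measurable_exponentialPDFReal r).ennreal_ofReal
          rw [restrict_withDensity measurableSet_Ioi,
            lintegral_withDensity_eq_lintegral_mul _ hpdfm
              (g := fun z => ENNReal.ofReal (Real.exp (-(g z) / ΩB)))
              (((hgm.neg.div_const ΩB).exp).ennreal_ofReal)]
          rfl
      _ = ∫⁻ z in Ioi (0:ℝ), ENNReal.ofReal (c * f z) := by
          refine setLIntegral_congr_fun measurableSet_Ioi (fun z hz => ?_)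
          rw [exponentialPDF_of_nonneg (le_of_lt hz),
            ← ENNReal.ofReal_mul (by positivity), hexp_eq z hz]
      _ = ENNReal.ofReal (∫ z in Ioi (0:ℝ), c * f z) := by
          rw [ofReal_integral_eq_lintegral_ofReal (hint.const_mul c)
            (ae_of_all _ (fun z => mul_nonneg hc0 (hf0 z)))]
      _ = ENNReal.ofReal (c * ∫ y in Ioi (0:ℝ), f y) := by rw [integral_const_mul]
  -- put things together
  have hcompl : ℙ E + ℙ Eᶜ = 1 := by
    have h := measure_add_measure_compl (μ := ℙ) hEm
    simpa using h
  have hPcne : ℙ Eᶜ ≠ ⊤ := measure_ne_top _ _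
  have hPEne : ℙ E ≠ ⊤ := measure_ne_top _ _
  have hsum : (ℙ E).toReal + (ℙ Eᶜ).toReal = 1 := by
    rw [← ENNReal.toReal_add hPEne hPcne, hcompl]
    simp
  have hPcr : (ℙ Eᶜ).toReal = c * ∫ y in Ioi (0:ℝ), f y := by
    rw [hPc2, ENNReal.toReal_ofReal
      (mul_nonneg hc0 (integral_nonneg hf0))]
  rw [show (ℙ {ω | C * X ω * Z ω * snr / (snr * (Ωξ + Z ω * D) + 1) ≤ u}) = ℙ E from rfl]
  linarith [hsum, hPcr]
end
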